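/- Let n ≥ 1 and let ρ = ρ₁ ⊗ ⋯ ⊗ ρₙ and σ = σ₁ ⊗ ⋯ ⊗ σₙ be n-qubit product states, where each ρᵢ, σᵢ is a 2×2 positive semidefinite complex matrix with trace 1 and ⊗ is the Kronecker product. For θ ∈ [0,π], φ ∈ [0,2π] let E(θ,φ) := v(θ,φ) v(θ,φ)* with v(θ,φ) := cos(θ/2)·e₀ + e^{iφ} sin(θ/2)·e₁ (e₀, e₁ the standard basis of ℂ²), and for i ∈ {1,…,n} let Eᵢ(θ,φ) := I₂^{⊗(i−1)} ⊗ E(θ,φ) ⊗ I₂^{⊗(n−i)}. Then (1/n) · Σ_{i=1}^n (1/(4π)) ∫_{0}^{2π} ∫_{0}^{π} (2·Re tr(Eᵢ(θ,φ)·ρ) − 2·Re tr(Eᵢ(θ,φ)·σ))² sin θ dθ dφ = (2/(3n)) · Σ_{i=1}^n Re tr((ρᵢ − σᵢ)²). Equivalently, the expected squared loss between f_ρ and f_σ under the distribution that picks a uniformly random qubit and measures it with a Haar-random single-qubit projector equals (4/(3n)) Σᵢ ‖ρᵢ − σᵢ‖²_tr, since for 2×2 Hermitian matrices of equal trace the squared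 trace distance ‖ρᵢ − σᵢ‖²_tr equals Re tr((ρᵢ − σᵢ)²)/2. -/

import Mathlib

open Matrix ComplexOrder

noncomputable section

/-- The single-qubit pure state `cos(θ/2)·e₀ + e^{iφ}·sin(θ/2)·e₁` in spherical coordinates
(with `e₀, e₁` the standard basis of `ℂ²`). -/
def blochVec (θ φ : ℝ) : Fin 2 → ℂ :=
  ![(Real.cos (θ / 2) : ℂ), Complex.exp (φ * Complex.I) * (Real.sin (θ / 2) : ℂ)]

/-- The Haar-random single-qubit projective measurement `E(θ,φ) = v(θ,φ) v(θ,φ)*`. -/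
def haarMeas (θ φ : ℝ) : Matrix (Fin 2) (Fin 2) ℂ :=
  Matrix.vecMulVec (blochVec θ φ) (star (blochVec θ φ))

/-- The `n`-qubit product state `τ₁ ⊗ ⋯ ⊗ τₙ` as a matrix indexed by bit strings. -/
def prodState {n : ℕ} (τ : Fin n → Matrix (Fin 2) (Fin 2) ℂ) :
    Matrix (Fin n → Fin 2) (Fin n → Fin 2) ℂ :=
  Matrix.of fun z w => ∏ i, τ i (z i) (w i)

/-- The measurement `I₂^{⊗(i−1)} ⊗ E(θ,φ) ⊗ I₂^{⊗(n−i)}` acting on qubit `i` only. -/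
def qubitMeas {n : ℕ} (i : Fin n) (θ φ : ℝ) :
    Matrix (Fin n → Fin 2) (Fin n → Fin 2) ℂ :=
  prodState fun j => if j = i then haarMeas θ φ else 1

/-! The measurement on qubit `i` of a product state only sees the `i`-th factor, since all
other factors have trace one. So the loss on qubit `i` is `2 tr(E(θ,φ) M)` with `M = ρᵢ − σᵢ`
traceless Hermitian, i.e. `M = x σₓ + y σ_y + z σ_z`, and `tr(E(θ,φ) M) = ⟨(x,y,z), r⟩` for the
Bloch vector `r = (sin θ cos φ, sin θ sin φ, cos θ)` of `E(θ,φ)`. The second moment of a linear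
form over the unit sphere is `4π/3 · ‖(x,y,z)‖²`, while `tr(M²) = 2 ‖(x,y,z)‖²`. -/

open Real intervalIntegral

lemma trace_prodState_mul_prodState {n : ℕ} (α β : Fin n → Matrix (Fin 2) (Fin 2) ℂ) :
    (prodState α * prodState β).trace = ∏ j, (α j * β j).trace := by
  simp only [Matrix.trace, Matrix.diag, Matrix.mul_apply, prodState, Matrix.of_apply,
    ← Finset.prod_mul_distrib, Fintype.prod_sum]

lemma trace_qubitMeas_mul_prodState {n : ℕ} (i : Fin n) (θ φ : ℝ)
    (τ : Fin n → Matrix (Fin 2) (Fin 2) ℂ) (htr : ∀ j ≠ i, (τ j).trace = 1) :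
    (qubitMeas i θ φ * prodState τ).trace = (haarMeas θ φ * τ i).trace := by
  rw [qubitMeas, trace_prodState_mul_prodState,
    Finset.prod_eq_single i (fun j _ hj => by simp [hj, htr j hj]) (by simp)]
  simp

/-- `x σₓ + y σ_y + z σ_z` in terms of the Pauli matrices. -/
def pauliComb (x y z : ℝ) : Matrix (Fin 2) (Fin 2) ℂ :=
  !![(z : ℂ), x - y * Complex.I; x + y * Complex.I, -z]

lemma Matrix.IsHermitian.exists_eq_pauliComb {M : Matrix (Fin 2) (Fin 2) ℂ} (hM : M.IsHermitian)
    (htr : M.trace = 0) : ∃ x y z : ℝ, M = pauliComb x y z := by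
  have h10 : M 1 0 = star (M 0 1) := (hM.apply 1 0).symm
  have h00 : ((M 0 0).re : ℂ) = M 0 0 := hM.coe_re_apply_self 0
  have h11 : M 1 1 = -M 0 0 := by rw [Matrix.trace_fin_two] at htr; linear_combination htr
  refine ⟨(M 0 1).re, -(M 0 1).im, (M 0 0).re, ?_⟩
  ext i j
  fin_cases i <;> fin_cases j <;> simp [pauliComb, h10, h11, h00, Complex.ext_iff]

lemma re_trace_haarMeas_mul_pauliComb (θ φ x y z : ℝ) :
    (haarMeas θ φ * pauliComb x y z).trace.re =
      x * (sin θ * cos φ) + y * (sin θ * sin φ) + z * cos θ := by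
  have hcos : cos θ = cos (θ / 2) ^ 2 - sin (θ / 2) ^ 2 := by
    rw [← cos_two_mul', mul_div_cancel₀ θ two_ne_zero]
  have hsin : sin θ = 2 * sin (θ / 2) * cos (θ / 2) := by
    rw [← sin_two_mul, mul_div_cancel₀ θ two_ne_zero]
  have hexp : Complex.exp (φ * Complex.I) = cos φ + sin φ * Complex.I := by
    rw [Complex.exp_mul_I, ← Complex.ofReal_cos, ← Complex.ofReal_sin]
  have hφ := sin_sq_add_cos_sq φ
  rw [hcos, hsin]
  simp only [haarMeas, blochVec, pauliComb, hexp, Matrix.trace_fin_two, Matrix.mul_apply,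
    Fin.sum_univ_two, Matrix.vecMulVec_apply, Pi.star_apply, Matrix.cons_val_zero,
    Matrix.cons_val_one, Matrix.of_apply, Matrix.cons_val', Matrix.empty_val',
    Matrix.cons_val_fin_one]
  generalize cos (θ / 2) = c, sin (θ / 2) = s, cos φ = cφ, sin φ = sφ at hφ ⊢
  simp [Complex.mul_re, Complex.mul_im]
  linear_combination (-z * s ^ 2) * hφ

lemma re_trace_pauliComb_mul_self (x y z : ℝ) :
    (pauliComb x y z * pauliComb x y z).trace.re = 2 * (x ^ 2 + y ^ 2 + z ^ 2) := by
  simp [pauliComb, Matrix.trace_fin_two]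
  ring

lemma integral_sq_mul_sin (a b : ℝ) :
    ∫ θ in (0 : ℝ)..π, (a * cos θ + b * sin θ) ^ 2 * sin θ = 2 / 3 * a ^ 2 + 4 / 3 * b ^ 2 := by
  have h : ∀ θ, (a * cos θ + b * sin θ) ^ 2 * sin θ =
      a ^ 2 * (sin θ * cos θ ^ 2) + 2 * a * b * (sin θ ^ 2 * cos θ) + b ^ 2 * sin θ ^ 3 :=
    fun θ => by ring
  simp_rw [h]
  rw [integral_add, integral_add]
  · simp only [integral_const_mul, integral_sin_mul_cos_sq, integral_sin_sq_mul_cos,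
      integral_sin_pow_three, cos_pi, cos_zero, sin_pi, sin_zero]
    ring
  all_goals exact Continuous.intervalIntegrable (by fun_prop) _ _

lemma integral_sq_cos_add_sin (a b : ℝ) :
    ∫ φ in (0 : ℝ)..2 * π, (a * cos φ + b * sin φ) ^ 2 = π * (a ^ 2 + b ^ 2) := by
  have h : ∀ φ, (a * cos φ + b * sin φ) ^ 2 =
      a ^ 2 * cos φ ^ 2 + 2 * a * b * (sin φ * cos φ) + b ^ 2 * sin φ ^ 2 := fun φ => by ring
  simp_rw [h]
  rw [integral_add, integral_add]
  · simp only [integral_const_mul, integral_cos_sq, integral_sin_mul_cos₁, integral_sin_sq,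
      cos_two_pi, sin_two_pi, cos_zero, sin_zero]
    ring
  all_goals exact Continuous.intervalIntegrable (by fun_prop) _ _

lemma integral_spherical_sq_linear (x y z : ℝ) :
    ∫ φ in (0 : ℝ)..2 * π, ∫ θ in (0 : ℝ)..π,
        (x * (sin θ * cos φ) + y * (sin θ * sin φ) + z * cos θ) ^ 2 * sin θ =
      4 * π / 3 * (x ^ 2 + y ^ 2 + z ^ 2) := by
  have h : ∀ θ φ, x * (sin θ * cos φ) + y * (sin θ * sin φ) + z * cos θ =
      z * cos θ + (x * cos φ + y * sin φ) * sin θ := fun θ φ => by ring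
  simp_rw [h, integral_sq_mul_sin]
  rw [integral_add, integral_const_mul, integral_const_mul, integral_sq_cos_add_sin]
  · simp only [integral_const, smul_eq_mul]
    ring
  all_goals exact Continuous.intervalIntegrable (by fun_prop) _ _

lemma haar_average_sq_re_trace_haarMeas_mul {M : Matrix (Fin 2) (Fin 2) ℂ}
    (hM : M.IsHermitian) (htr : M.trace = 0) :
    1 / (4 * π) * ∫ φ in (0 : ℝ)..2 * π, ∫ θ in (0 : ℝ)..π,
        (2 * (haarMeas θ φ * M).trace.re) ^ 2 * sin θ =
      2 / 3 * (M * M).trace.re := by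
  obtain ⟨x, y, z, rfl⟩ := hM.exists_eq_pauliComb htr
  simp_rw [re_trace_haarMeas_mul_pauliComb, re_trace_pauliComb_mul_self, mul_pow, mul_assoc,
    integral_const_mul, integral_spherical_sq_linear]
  field_simp

theorem product_state_squared_loss_general {n : ℕ}
    (ρ σ : Fin n → Matrix (Fin 2) (Fin 2) ℂ)
    (hρ : ∀ i, (ρ i).PosSemidef) (hρtr : ∀ i, (ρ i).trace = 1)
    (hσ : ∀ i, (σ i).PosSemidef) (hσtr : ∀ i, (σ i).trace = 1) :
    (1 / n : ℝ) *
        ∑ i : Fin n, (1 / (4 * Real.pi)) *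
          ∫ φ in (0 : ℝ)..(2 * Real.pi), ∫ θ in (0 : ℝ)..Real.pi,
            (2 * (qubitMeas i θ φ * prodState ρ).trace.re -
                2 * (qubitMeas i θ φ * prodState σ).trace.re) ^ 2 * Real.sin θ =
      (2 / (3 * n)) * ∑ i : Fin n, ((ρ i - σ i) * (ρ i - σ i)).trace.re := by
  have hloss : ∀ i θ φ, 2 * (qubitMeas i θ φ * prodState ρ).trace.re -
      2 * (qubitMeas i θ φ * prodState σ).trace.re = 2 * (haarMeas θ φ * (ρ i - σ i)).trace.re := by
    intro i θ φ
    rw [trace_qubitMeas_mul_prodState i θ φ ρ fun j _ => hρtr j,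
      trace_qubitMeas_mul_prodState i θ φ σ fun j _ => hσtr j, Matrix.mul_sub, Matrix.trace_sub,
      Complex.sub_re, mul_sub]
  have hsingle : ∀ i, 1 / (4 * π) * ∫ φ in (0 : ℝ)..2 * π, ∫ θ in (0 : ℝ)..π,
      (2 * (haarMeas θ φ * (ρ i - σ i)).trace.re) ^ 2 * sin θ =
        2 / 3 * ((ρ i - σ i) * (ρ i - σ i)).trace.re := fun i =>
    haar_average_sq_re_trace_haarMeas_mul ((hρ i).1.sub (hσ i).1)
      (by rw [Matrix.trace_sub, hρtr, hσtr, sub_self])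
  simp_rw [hloss, hsingle, ← Finset.mul_sum]
  ring

/-- The expected squared loss between the p-concepts of two product states, under the
distribution that picks a uniformly random qubit and measures it with a Haar-random
single-qubit projector, equals `(4/(3n)) Σᵢ ‖ρᵢ − σᵢ‖²_tr = (2/(3n)) Σᵢ tr((ρᵢ − σᵢ)²)`. -/
theorem product_state_squared_loss {n : ℕ} (hn : 1 ≤ n)
    (ρ σ : Fin n → Matrix (Fin 2) (Fin 2) ℂ)
    (hρ : ∀ i, (ρ i).PosSemidef) (hρtr : ∀ i, (ρ i).trace = 1)
    (hσ : ∀ i, (σ i).PosSemidef) (hσtr : ∀ i, (σ i).trace = 1) :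
    (1 / n : ℝ) *
        ∑ i : Fin n, (1 / (4 * Real.pi)) *
          ∫ φ in (0 : ℝ)..(2 * Real.pi), ∫ θ in (0 : ℝ)..Real.pi,
            (2 * (qubitMeas i θ φ * prodState ρ).trace.re -
                2 * (qubitMeas i θ φ * prodState σ).trace.re) ^ 2 * Real.sin θ =
      (2 / (3 * n)) * ∑ i : Fin n, ((ρ i - σ i) * (ρ i - σ i)).trace.re :=
  product_state_squared_loss_general ρ σ hρ hρtr hσ hσtr
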